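/- arXiv:1708.02787 — 5 statements merged into one kernel-verified Lean document; each statement's English description precedes it below -/
import Mathlib

section
/- For every integer d ≥ 2, (1 − 1/d) / ln(1/(1 − (1/d)(1 − 1/d)^d)) ≥ 1 / ln(1/(1 − (1/(d−1))(1 − 1/d)^d)). -/
theorem stmt_4 (d : ℕ) (hd : 2 ≤ d) :
    1 / Real.log (1 / (1 - (1 / ((d : ℝ) - 1)) * (1 - 1 / (d : ℝ)) ^ d)) ≤
    (1 - 1 / (d : ℝ)) / Real.log (1 / (1 - (1 / (d : ℝ)) * (1 - 1 / (d : ℝ)) ^ d)) := by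
  have hd2 : (2 : ℝ) ≤ (d : ℝ) := by exact_mod_cast hd
  set x : ℝ := 1 - 1 / (d : ℝ) with hxdef
  have hdpos : (0 : ℝ) < d := by linarith
  have hdm1 : (0 : ℝ) < (d : ℝ) - 1 := by linarith
  have hx0 : 0 < x := by
    have : 1 / (d : ℝ) ≤ 1 / 2 := by
      apply one_div_le_one_div_of_le <;> linarith
    simp only [hxdef]; linarith
  have hx1 : x < 1 := by
    have : 0 < 1 / (d : ℝ) := by positivity
    simp only [hxdef]; linarith
  have hxd1 : x ^ d < 1 := pow_lt_one₀ hx0.le hx1 (by omega)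
  have hxd0 : 0 < x ^ d := pow_pos hx0 d
  set b : ℝ := (1 / ((d : ℝ) - 1)) * x ^ d with hbdef
  have hb0 : 0 < b := by positivity
  have hb1 : b < 1 := by
    have h1 : 1 / ((d : ℝ) - 1) ≤ 1 := by
      rw [div_le_one hdm1]; linarith
    calc b ≤ 1 * x ^ d := by
            apply mul_le_mul_of_nonneg_right h1 hxd0.le
      _ < 1 := by simpa using hxd1
  have hkey : (1 / (d : ℝ)) * x ^ d = x * b := by
    simp only [hbdef, hxdef]
    field_simp
  rw [hkey]
  have hxb1 : x * b < 1 := by nlinarith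
  have hxb0 : 0 < x * b := by positivity
  -- concavity of log
  have hconc := strictConcaveOn_log_Ioi.concaveOn.2
    (show (1 : ℝ) - b ∈ Set.Ioi (0:ℝ) by simp; linarith)
    (show (1 : ℝ) ∈ Set.Ioi (0:ℝ) by simp)
    hx0.le (show (0:ℝ) ≤ 1 - x by linarith) (show x + (1 - x) = 1 by ring)
  simp only [smul_eq_mul, Real.log_one, mul_one] at hconc
  have hconc' : x * Real.log (1 - b) ≤ Real.log (1 - x * b) := by
    have : x * (1 - b) + (1 - x) = 1 - x * b := by ring
    rw [this] at hconc
    linarith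
  have hLb : Real.log (1 / (1 - b)) = -Real.log (1 - b) := by
    rw [one_div, Real.log_inv]
  have hLa : Real.log (1 / (1 - x * b)) = -Real.log (1 - x * b) := by
    rw [one_div, Real.log_inv]
  rw [hLa, hLb]
  have hlogb : Real.log (1 - b) < 0 := Real.log_neg (by linarith) (by linarith)
  have hloga : Real.log (1 - x * b) < 0 := Real.log_neg (by linarith) (by linarith)
  rw [div_le_div_iff₀ (by linarith) (by linarith)]
  nlinarith
end

section
/- For every integer d ≥ 2 and every integer w with 1 ≤ w ≤ d − 1, let p = 1 − 1/d. Then ln(1/(1 + p^d − p^w)) / ln(1/(1 + p^d − p^{d−1})) ≥ d − w. -/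
lemma aux_geom (p : ℝ) (hp0 : 0 ≤ p) (hp1 : p ≤ 1) :
    ∀ k : ℕ, (k : ℝ) * p ^ k * (1 - p) ≤ p - p ^ (k + 1) := by
  intro k
  induction k with
  | zero => simp
  | succ n ih =>
    have hpn : p ^ (n + 1) ≤ p ^ n := pow_le_pow_of_le_one hp0 hp1 (by omega)
    have hs2 : p ^ (n + 1 + 1) = p ^ (n + 1) * p := pow_succ p (n + 1)
    have h3 : (0:ℝ) ≤ (n:ℝ) * (1 - p) := mul_nonneg (Nat.cast_nonneg n) (by linarith)
    have h4 := mul_le_mul_of_nonneg_left hpn h3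
    push_cast
    nlinarith [pow_nonneg hp0 (n + 1)]

theorem stmt_7 (d w : ℕ) (hd : 2 ≤ d) (hw1 : 1 ≤ w) (hw2 : w ≤ d - 1) :
    ((d : ℝ) - w) ≤
      Real.log (1 / (1 + (1 - 1 / (d : ℝ)) ^ d - (1 - 1 / (d : ℝ)) ^ w)) /
      Real.log (1 / (1 + (1 - 1 / (d : ℝ)) ^ d - (1 - 1 / (d : ℝ)) ^ (d - 1))) := by
  set p : ℝ := 1 - 1 / (d : ℝ) with hp
  have hdR : (2:ℝ) ≤ (d:ℝ) := by exact_mod_cast hd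
  have hd0 : (0:ℝ) < d := by linarith
  have hp0 : 0 < p := by
    rw [hp, sub_pos, div_lt_one hd0]; linarith
  have hp1 : p < 1 := by
    rw [hp]; have : 0 < 1 / (d:ℝ) := by positivity
    linarith
  set k : ℕ := d - w with hk
  have hk1 : 1 ≤ k := by omega
  have hwk : w + k = d := by omega
  have hd1 : d - 1 + 1 = d := by omega
  -- basic powers
  have hpd1 : (0:ℝ) < p ^ (d-1) := pow_pos hp0 _
  have hpw : (0:ℝ) < p ^ w := pow_pos hp0 _
  have hpd : (0:ℝ) < p ^ d := pow_pos hp0 _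
  have hple1 : p ^ (d-1) ≤ 1 := pow_le_one₀ hp0.le hp1.le
  have hpwle1 : p ^ w ≤ 1 := pow_le_one₀ hp0.le hp1.le
  have hBrw : p ^ d = p ^ (d-1) * p := by rw [← pow_succ, hd1]
  set B : ℝ := 1 + p ^ d - p ^ (d-1) with hBdef
  set C : ℝ := 1 + p ^ d - p ^ w with hCdef
  have hB0 : 0 < B := by rw [hBdef, hBrw]; nlinarith
  have hB1 : B < 1 := by rw [hBdef, hBrw]; nlinarith
  have hC0 : 0 < C := by rw [hCdef]; nlinarith
  -- key inequality: C ≤ B ^ k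
  have hkey : C ≤ B ^ k := by
    have hx : B = 1 + (-(p ^ (d-1) * (1 - p))) := by rw [hBdef, hBrw]; ring
    have hxle : (-2:ℝ) ≤ -(p ^ (d-1) * (1 - p)) := by nlinarith
    have hbern := one_add_mul_le_pow hxle k
    rw [← hx] at hbern
    -- need: C ≤ 1 + k * (-(p^(d-1)*(1-p)))
    have hgeom := aux_geom p hp0.le hp1.le k
    have hw' : w - 1 + 1 = w := by omega
    have hmul : p ^ (w-1) * ((k:ℝ) * p ^ k * (1 - p)) ≤ p ^ (w-1) * (p - p ^ (k+1)) :=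
      mul_le_mul_of_nonneg_left hgeom (pow_nonneg hp0.le _)
    have he1 : p ^ (w-1) * (p - p ^ (k+1)) = p ^ w - p ^ d := by
      have h1 : p ^ (w-1) * p = p ^ w := by rw [← pow_succ, hw']
      have h2 : p ^ (w-1) * p ^ (k+1) = p ^ d := by
        rw [← pow_add]; congr 1; omega
      rw [mul_sub, h1, h2]
    have he2 : p ^ (w-1) * ((k:ℝ) * p ^ k * (1 - p)) = (k:ℝ) * p ^ (d-1) * (1 - p) := by
      have : p ^ (w-1) * p ^ k = p ^ (d-1) := by rw [← pow_add]; congr 1; omega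
      calc p ^ (w-1) * ((k:ℝ) * p ^ k * (1 - p)) = (k:ℝ) * (p ^ (w-1) * p ^ k) * (1-p) := by ring
        _ = (k:ℝ) * p ^ (d-1) * (1 - p) := by rw [this]
    rw [he1, he2] at hmul
    calc C ≤ 1 + (k:ℝ) * (-(p ^ (d-1) * (1 - p))) := by rw [hCdef]; nlinarith
      _ ≤ B ^ k := hbern
  have hD : 0 < Real.log (1 / B) := by
    rw [one_div, Real.log_inv]
    have := Real.log_neg hB0 hB1
    linarith
  rw [le_div_iff₀ hD, one_div, one_div, Real.log_inv, Real.log_inv]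
  have hcast : (d:ℝ) - w = (k:ℝ) := by rw [hk, Nat.cast_sub (by omega : w ≤ d)]
  rw [hcast]
  have hlog : Real.log C ≤ Real.log (B ^ k) := Real.log_le_log hC0 hkey
  rw [Real.log_pow] at hlog
  push_cast at hlog ⊢
  linarith
end

section
/- For every integer d ≥ 2 and every integer w with 1 ≤ w ≤ d − 1, let p = 1 − 1/d. Then ln(1/(1 − 2p^d + 2p^{2d−w})) / ln(1/(1 − (1/(d−1))p^d)) ≥ d − w. -/
/-!
Write `p = 1 - 1/d`, `k = d - w`, `A = 1 - 2 p^d (1 - p^k)` and `B = 1 - p^d / (d - 1)`; the claim is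
`k ≤ log (1/A) / log (1/B)`, which follows from `A ≤ B^k`. By Bernoulli, `B^k ≥ 1 - k p^d / (d - 1)`,
so it suffices that `k ≤ 2 (d - 1) (1 - p^k)`. Since `1/p = 1 + 1/(d - 1)`, Bernoulli again gives
`p^k (d - 1 + k) ≤ d - 1`, i.e. `1 - p^k ≥ k / (d - 1 + k) ≥ k / (2 (d - 1))` because `k ≤ d - 1`.
-/

open Real

lemma one_sub_inv_pow_mul_le {D : ℝ} (hD : 1 < D) (m : ℕ) :
    (1 - 1 / D) ^ m * (D - 1 + m) ≤ D - 1 := by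
  have hD1 : 0 < D - 1 := by linarith
  have hD0 : D ≠ 0 := by positivity
  calc (1 - 1 / D) ^ m * (D - 1 + m)
      = (D - 1) * ((1 - 1 / D) ^ m * (1 + m * (1 / (D - 1)))) := by field_simp
    _ ≤ (D - 1) * ((1 - 1 / D) ^ m * (1 + 1 / (D - 1)) ^ m) := by
        have hp : 0 ≤ 1 - 1 / D := by rw [sub_nonneg, div_le_one₀ (by linarith)]; exact hD.le
        gcongr
        exact one_add_mul_le_pow (by linarith [one_div_pos.2 hD1]) m
    _ = D - 1 := by
        have hinv : (1 - 1 / D) * (1 + 1 / (D - 1)) = 1 := by field_simp; ring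
        rw [← mul_pow, hinv, one_pow, mul_one]

lemma le_two_mul_sub_one_mul_one_sub_pow {D : ℝ} (hD : 1 < D) {k : ℕ} (hk : (k : ℝ) ≤ D - 1) :
    (k : ℝ) ≤ 2 * (D - 1) * (1 - (1 - 1 / D) ^ k) := by
  have hp0 : 0 ≤ 1 - 1 / D := by rw [sub_nonneg, div_le_one₀ (by linarith)]; exact hD.le
  have hp1 : 1 - 1 / D ≤ 1 := by linarith [one_div_pos.2 (by linarith : 0 < D)]
  have hpk : 0 ≤ 1 - (1 - 1 / D) ^ k := sub_nonneg.2 (pow_le_one₀ hp0 hp1)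
  nlinarith [one_sub_inv_pow_mul_le hD k, mul_nonneg (sub_nonneg.2 hk) hpk]

lemma one_sub_two_mul_le_pow {D x : ℝ} (hD : 1 < D) (hx0 : 0 ≤ x) (hx : x ≤ 2 * (D - 1)) {k : ℕ}
    (hk : (k : ℝ) ≤ D - 1) :
    1 - 2 * x * (1 - (1 - 1 / D) ^ k) ≤ (1 - 1 / (D - 1) * x) ^ k := by
  have hD1 : 0 < D - 1 := by linarith
  have hc : 1 / (D - 1) * x ≤ 2 := by rw [one_div_mul_eq_div, div_le_iff₀ hD1]; linarith
  have hkx : k * (1 / (D - 1) * x) ≤ 2 * x * (1 - (1 - 1 / D) ^ k) :=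
    calc k * (1 / (D - 1) * x) = x / (D - 1) * k := by ring
      _ ≤ x / (D - 1) * (2 * (D - 1) * (1 - (1 - 1 / D) ^ k)) := by
          gcongr; exact le_two_mul_sub_one_mul_one_sub_pow hD hk
      _ = 2 * x * (1 - (1 - 1 / D) ^ k) := by field_simp
  calc 1 - 2 * x * (1 - (1 - 1 / D) ^ k)
      ≤ 1 + k * -(1 / (D - 1) * x) := by linarith
    _ ≤ (1 + -(1 / (D - 1) * x)) ^ k := one_add_mul_le_pow (by linarith) k
    _ = (1 - 1 / (D - 1) * x) ^ k := by ring

lemma le_log_inv_div_log_inv {a b : ℝ} (ha : 0 < a) (hb0 : 0 < b) (hb1 : b < 1) {k : ℕ}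
    (h : a ≤ b ^ k) : (k : ℝ) ≤ log (1 / a) / log (1 / b) := by
  have hlog : log (1 / b ^ k) ≤ log (1 / a) :=
    log_le_log (by positivity) (one_div_le_one_div_of_le ha h)
  rw [← one_div_pow, log_pow] at hlog
  rwa [le_div_iff₀ (log_pos (one_lt_one_div hb0 hb1))]

lemma one_sub_inv_pow_self_lt_half {d : ℕ} (hd : 2 ≤ d) : (1 - 1 / (d : ℝ)) ^ d < 1 / 2 := by
  have hD : (2 : ℝ) ≤ d := by exact_mod_cast hd
  nlinarith [one_sub_inv_pow_mul_le (by linarith : (1 : ℝ) < d) d]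

theorem stmt_8 (d w : ℕ) (hd : 2 ≤ d) (hw1 : 1 ≤ w) (hw2 : w ≤ d - 1) :
    ((d : ℝ) - w) ≤
      Real.log (1 / (1 - 2 * (1 - 1 / (d : ℝ)) ^ d + 2 * (1 - 1 / (d : ℝ)) ^ (2 * d - w))) /
      Real.log (1 / (1 - (1 / ((d : ℝ) - 1)) * (1 - 1 / (d : ℝ)) ^ d)) := by
  have hD : (2 : ℝ) ≤ d := by exact_mod_cast hd
  set k := d - w with hk
  have hkD : (k : ℝ) ≤ d - 1 := by
    have : (k : ℝ) + 1 ≤ d := by exact_mod_cast (by omega : k + 1 ≤ d)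
    linarith
  have hcast : (d : ℝ) - w = k := by rw [hk, Nat.cast_sub (by omega)]
  rw [show 2 * d - w = d + k by omega, pow_add, hcast]
  set p := 1 - 1 / (d : ℝ) with hp
  have hp0 : 0 < p := by
    rw [hp, sub_pos, div_lt_one (by linarith)]; linarith
  have hpd : p ^ d < 1 / 2 := one_sub_inv_pow_self_lt_half hd
  have hpd0 : 0 < p ^ d := by positivity
  have hpk : 0 ≤ p ^ k := by positivity
  have hc0 : 0 < 1 / ((d : ℝ) - 1) * p ^ d := mul_pos (one_div_pos.2 (by linarith)) hpd0
  have hc1 : 1 / ((d : ℝ) - 1) * p ^ d ≤ p ^ d := by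
    rw [one_div_mul_eq_div, div_le_iff₀ (by linarith)]; nlinarith
  refine le_log_inv_div_log_inv (by nlinarith) (by linarith) (by linarith) ?_
  convert one_sub_two_mul_le_pow (by linarith) hpd0.le (by linarith) hkD using 1
  ring
end

section
/- For integers d ≥ 2 and reals p ∈ (0,1), and integers d1, d2 ≤ d, k ≤ min(d1,d2) with (d1,k) ≠ (d2,d2) describing distinct sets: define P(n,d1,d2,k,p) = n^{d2−k}·(1 − p^{d2} − p^{d1} + 2p^{d1+d2−k})^m for fixed n ≥ 2, m ≥ 1. If 1 − 2p^{d2−k} ≥ 0 and d2 > k, then P(n,d1,d2,k,p) ≤ P(n,d,d,d−(d2−k),p) = n^{d2−k}(1 − 2p^d + 2p^{d+d2−k})^m. -/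
theorem stmt_13 (n m d d1 d2 k : ℕ) (hn : 2 ≤ n) (hm : 1 ≤ m) (hd : 2 ≤ d)
    (hd1 : 1 ≤ d1) (hd1d : d1 ≤ d) (hd2 : 1 ≤ d2) (hd2d : d2 ≤ d)
    (hk1 : k ≤ d1) (hk2 : k < d2)
    (p : ℝ) (hp0 : 0 < p) (hp1 : p < 1)
    (hcond : 0 ≤ 1 - 2 * p ^ (d2 - k)) :
    (n : ℝ) ^ (d2 - k) * (1 - p ^ d2 - p ^ d1 + 2 * p ^ (d1 + d2 - k)) ^ m ≤
    (n : ℝ) ^ (d2 - k) * (1 - 2 * p ^ d + 2 * p ^ (d + d2 - k)) ^ m := by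
  have e1 : d1 + d2 - k = d1 + (d2 - k) := by omega
  have e2 : d + d2 - k = d + (d2 - k) := by omega
  rw [e1, e2, pow_add, pow_add]
  have hp0' : (0:ℝ) ≤ p := hp0.le
  have hp1' : (0:ℝ) ≤ 1 - p := by linarith
  have h1 : p ^ d ≤ p ^ d1 := pow_le_pow_of_le_one hp0' hp1.le hd1d
  have h2 : p ^ d ≤ p ^ d2 := pow_le_pow_of_le_one hp0' hp1.le hd2d
  have h3 : p ^ d2 ≤ p ^ (d2 - k) :=
    pow_le_pow_of_le_one hp0' hp1.le (Nat.sub_le _ _)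
  have hd1le : p ^ d1 ≤ 1 := pow_le_one₀ hp0' hp1.le
  have hd2le : p ^ d2 ≤ 1 := pow_le_one₀ hp0' hp1.le
  have hposd1 : (0:ℝ) < p ^ d1 := pow_pos hp0 _
  have hposd2 : (0:ℝ) < p ^ d2 := pow_pos hp0 _
  have hposd : (0:ℝ) < p ^ d := pow_pos hp0 _
  have hposk : (0:ℝ) < p ^ (d2 - k) := pow_pos hp0 _
  apply mul_le_mul_of_nonneg_left _ (pow_nonneg (Nat.cast_nonneg n) _)
  apply pow_le_pow_left₀
  · nlinarith [mul_nonneg (mul_nonneg hposd1.le hp1') hposd2.le,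
      mul_pos hposd1 hposd2, mul_le_mul_of_nonneg_left h3 hposd1.le,
      mul_nonneg (sub_nonneg.mpr hd1le) (sub_nonneg.mpr hd2le)]
  · nlinarith [mul_le_mul_of_nonneg_right h1 hposk.le,
      mul_nonneg (sub_nonneg.mpr h1) hcond]
end

section
/- For fixed r, n with 1 ≤ r ≤ n and integer x with 1 ≤ x and x ≤ n/2 (so that all factors are defined and the error bound applies), q_x = ∏_{i=1}^x (1 − r/(n−i+1)) ≥ (1 − r/n)^x − x^2·r/n^2. -/
/-- ∏(b i) ≥ ∏(a i) - ∑(a i - b i) when 0 ≤ b i ≤ a i ≤ 1. -/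
lemma prod_sub_sum_le_aux (s : Finset ℕ) (a b : ℕ → ℝ)
    (h : ∀ i ∈ s, 0 ≤ b i ∧ b i ≤ a i ∧ a i ≤ 1) :
    (∏ i ∈ s, a i) - ∑ i ∈ s, (a i - b i) ≤ ∏ i ∈ s, b i := by
  induction s using Finset.cons_induction with
  | empty => simp
  | cons j s hj ih =>
    have hs : ∀ i ∈ s, 0 ≤ b i ∧ b i ≤ a i ∧ a i ≤ 1 := fun i hi =>
      h i (Finset.mem_cons_of_mem hi)
    have hjh := h j (Finset.mem_cons_self j s)
    have ihs := ih hs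
    have hA1 : ∏ i ∈ s, a i ≤ 1 :=
      Finset.prod_le_one (fun i hi => le_trans (hs i hi).1 (hs i hi).2.1)
        (fun i hi => (hs i hi).2.2)
    have hS0 : 0 ≤ ∑ i ∈ s, (a i - b i) :=
      Finset.sum_nonneg (fun i hi => by linarith [(hs i hi).2.1])
    rw [Finset.prod_cons, Finset.prod_cons, Finset.sum_cons]
    have h1 : b j * ((∏ i ∈ s, a i) - ∑ i ∈ s, (a i - b i)) ≤ b j * ∏ i ∈ s, b i :=
      mul_le_mul_of_nonneg_left ihs hjh.1
    nlinarith [hjh.1, hjh.2.1, hjh.2.2]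

theorem stmt_18 (n r x : ℕ) (hr1 : 1 ≤ r) (hrn : r ≤ n) (hx1 : 1 ≤ x)
    (hx2 : 2 * x ≤ n) :
    (1 - (r : ℝ) / n) ^ x - (x : ℝ) ^ 2 * r / (n : ℝ) ^ 2 ≤
      ∏ i ∈ Finset.range x, (1 - (r : ℝ) / ((n : ℝ) - i)) := by
  have hn1 : (1 : ℕ) ≤ n := le_trans hr1 hrn
  have hN : (1 : ℝ) ≤ (n : ℝ) := by exact_mod_cast hn1
  have hn0 : (0 : ℝ) < (n : ℝ) := by linarith
  have hR1 : (1 : ℝ) ≤ (r : ℝ) := by exact_mod_cast hr1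
  have hRN : (r : ℝ) ≤ (n : ℝ) := by exact_mod_cast hrn
  have hX1 : (1 : ℝ) ≤ (x : ℝ) := by exact_mod_cast hx1
  have hX2 : 2 * (x : ℝ) ≤ (n : ℝ) := by exact_mod_cast hx2
  -- basic facts for indices i < x
  have hix : ∀ i ∈ Finset.range x, (i : ℝ) ≤ (x : ℝ) - 1 := by
    intro i hi
    have : i + 1 ≤ x := Finset.mem_range.mp hi
    have := (Nat.cast_le (α := ℝ)).mpr this
    push_cast at this; linarith
  have hden : ∀ i ∈ Finset.range x, (x : ℝ) + 1 ≤ (n : ℝ) - i := by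
    intro i hi
    have := hix i hi; linarith
  have hdenpos : ∀ i ∈ Finset.range x, (0 : ℝ) < (n : ℝ) - i := by
    intro i hi; have := hden i hi; linarith
  have hden2 : ∀ i ∈ Finset.range x, (n : ℝ) / 2 ≤ (n : ℝ) - i := by
    intro i hi
    have := hix i hi; linarith
  by_cases hc : r + x ≤ n + 1
  · -- all factors nonnegative; use the product-sum lemma
    have hcR : (r : ℝ) + (x : ℝ) ≤ (n : ℝ) + 1 := by exact_mod_cast hc
    have key := prod_sub_sum_le_aux (Finset.range x)
      (fun _ => 1 - (r : ℝ) / n) (fun i => 1 - (r : ℝ) / ((n : ℝ) - i)) ?_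
    · have hprod : (∏ _i ∈ Finset.range x, (1 - (r : ℝ) / n)) = (1 - (r : ℝ) / n) ^ x := by
        rw [Finset.prod_const, Finset.card_range]
      rw [hprod] at key
      have hsum : (∑ i ∈ Finset.range x,
          ((1 - (r : ℝ) / n) - (1 - (r : ℝ) / ((n : ℝ) - i)))) ≤
          (x : ℝ) ^ 2 * r / (n : ℝ) ^ 2 := by
        have hterm : ∀ i ∈ Finset.range x,
            (1 - (r : ℝ) / n) - (1 - (r : ℝ) / ((n : ℝ) - i)) ≤
            2 * r / (n : ℝ) ^ 2 * i := by
          intro i hi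
          have hd := hdenpos i hi
          have hd2 := hden2 i hi
          have hi0 : (0 : ℝ) ≤ (i : ℝ) := Nat.cast_nonneg i
          have key2 : (r : ℝ) / ((n : ℝ) - i) - (r : ℝ) / n ≤
              2 * r / (n : ℝ) ^ 2 * i := by
            rw [div_sub_div _ _ (ne_of_gt hd) (ne_of_gt hn0),
              div_le_iff₀ (by positivity)]
            have hexp : 2 * (r : ℝ) / (n : ℝ) ^ 2 * i * (((n : ℝ) - i) * n) =
                2 * r * i * ((n : ℝ) - i) / n := by
              field_simp
            rw [hexp, le_div_iff₀ hn0]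
            nlinarith [mul_le_mul_of_nonneg_left hd2
              (by positivity : (0 : ℝ) ≤ 2 * (r : ℝ) * i)]
          linarith
        calc (∑ i ∈ Finset.range x,
            ((1 - (r : ℝ) / n) - (1 - (r : ℝ) / ((n : ℝ) - i))))
            ≤ ∑ i ∈ Finset.range x, 2 * r / (n : ℝ) ^ 2 * i :=
              Finset.sum_le_sum hterm
          _ = 2 * r / (n : ℝ) ^ 2 * ∑ i ∈ Finset.range x, (i : ℝ) := by
              rw [Finset.mul_sum]
          _ ≤ (x : ℝ) ^ 2 * r / (n : ℝ) ^ 2 := by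
              have hgauss : (∑ i ∈ Finset.range x, (i : ℝ)) = x * (x - 1) / 2 := by
                have h2 := Finset.sum_range_id_mul_two x
                have : ((∑ i ∈ Finset.range x, i : ℕ) : ℝ) * 2 = (x : ℝ) * ((x : ℝ) - 1) := by
                  rw [← Nat.cast_ofNat, ← Nat.cast_mul, h2]
                  rw [Nat.cast_mul, Nat.cast_sub hx1]
                  push_cast; ring
                rw [Nat.cast_sum] at this
                linarith
              rw [hgauss]
              rw [div_mul_eq_mul_div, div_le_div_iff₀ (by positivity) (by positivity)]
              have hpos : (0 : ℝ) ≤ (r : ℝ) * (x : ℝ) * (n : ℝ) ^ 2 := by positivity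
              nlinarith [hpos]
      linarith
    · -- hypotheses of the lemma
      intro i hi
      have hd := hdenpos i hi
      have hixi := hix i hi
      refine ⟨?_, ?_, ?_⟩
      · have hrle : (r : ℝ) ≤ (n : ℝ) - i := by linarith
        have : (r : ℝ) / ((n : ℝ) - i) ≤ 1 := by
          rw [div_le_one hd]; exact hrle
        linarith
      · have h1 : (r : ℝ) / n ≤ (r : ℝ) / ((n : ℝ) - i) := by
          apply div_le_div_of_nonneg_left (by linarith) hd
          linarith [Nat.cast_nonneg (α := ℝ) i]
        linarith
      · have : (0 : ℝ) ≤ (r : ℝ) / n := by positivity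
        linarith
  · -- factors may be negative; bound the product below by -(1 - r/n)
    push_neg at hc
    have hcR : (n : ℝ) + 2 ≤ (r : ℝ) + x := by exact_mod_cast hc
    have hX2' : (2 : ℝ) ≤ (x : ℝ) := by nlinarith
    obtain ⟨t, ht⟩ : ∃ t : ℝ, t = 1 - (r : ℝ) / n := ⟨_, rfl⟩
    have ht0 : 0 ≤ t := by
      rw [ht]
      have : (r : ℝ) / n ≤ 1 := by rw [div_le_one hn0]; exact hRN
      linarith
    have ht1 : t ≤ 1 := by
      rw [ht]
      have : (0 : ℝ) ≤ (r : ℝ) / n := by positivity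
      linarith
    have htn : t * n ≤ (x : ℝ) - 2 := by
      have h1 : t * n = (n : ℝ) - r := by rw [ht]; field_simp
      rw [h1]; linarith
    -- |factor i| ≤ if i = 0 then t else 1
    have habs : ∀ i ∈ Finset.range x,
        |1 - (r : ℝ) / ((n : ℝ) - i)| ≤ (if i = 0 then t else 1) := by
      intro i hi
      have hd := hdenpos i hi
      have hdd := hden i hi
      by_cases hi0 : i = 0
      · subst hi0
        rw [if_pos rfl, abs_le]
        constructor
        · simp only [Nat.cast_zero, sub_zero]
          rw [ht]; linarith
        · simp only [Nat.cast_zero, sub_zero]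
          rw [ht]
      · rw [if_neg hi0, abs_le]
        constructor
        · have hixi := hix i hi
          have hr2 : (r : ℝ) ≤ 2 * ((n : ℝ) - i) := by linarith
          have : (r : ℝ) / ((n : ℝ) - i) ≤ 2 := by
            rw [div_le_iff₀ hd]; linarith
          linarith
        · have : (0 : ℝ) ≤ (r : ℝ) / ((n : ℝ) - i) := by positivity
          linarith
    have hprodlb : -t ≤ ∏ i ∈ Finset.range x, (1 - (r : ℝ) / ((n : ℝ) - i)) := by
      have h1 : |∏ i ∈ Finset.range x, (1 - (r : ℝ) / ((n : ℝ) - i))| =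
          ∏ i ∈ Finset.range x, |1 - (r : ℝ) / ((n : ℝ) - i)| :=
        Finset.abs_prod _ _
      have h2 : (∏ i ∈ Finset.range x, |1 - (r : ℝ) / ((n : ℝ) - i)|) ≤
          ∏ i ∈ Finset.range x, (if i = 0 then t else 1) :=
        Finset.prod_le_prod (fun i _ => abs_nonneg _) habs
      have h3 : (∏ i ∈ Finset.range x, (if i = 0 then t else (1 : ℝ))) = t := by
        rw [Finset.prod_eq_single_of_mem 0 (Finset.mem_range.mpr hx1)
          (fun b _ hb => if_neg hb)]
        simp
      have h4 : |∏ i ∈ Finset.range x, (1 - (r : ℝ) / ((n : ℝ) - i))| ≤ t := by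
        rw [h1]; rw [h3] at h2; exact h2
      have := neg_abs_le (∏ i ∈ Finset.range x, (1 - (r : ℝ) / ((n : ℝ) - i)))
      linarith
    have htx : t ^ x ≤ t := by
      calc t ^ x ≤ t ^ 1 := pow_le_pow_of_le_one ht0 ht1 hx1
        _ = t := pow_one t
    have h2t : 2 * t ≤ (x : ℝ) ^ 2 * r / (n : ℝ) ^ 2 := by
      rw [le_div_iff₀ (by positivity)]
      have hn2r : (n : ℝ) ≤ 2 * r := by linarith
      nlinarith [mul_le_mul_of_nonneg_right htn (by linarith : (0 : ℝ) ≤ 2 * (n : ℝ)),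
        mul_nonneg (by linarith : (0 : ℝ) ≤ (x : ℝ) - 2) (by linarith : (0 : ℝ) ≤ (r : ℝ)),
        mul_nonneg (mul_nonneg (by linarith : (0 : ℝ) ≤ (x : ℝ) - 2)
          (by linarith : (0 : ℝ) ≤ (x : ℝ) - 2)) (by linarith : (0 : ℝ) ≤ (r : ℝ))]
    rw [← ht]
    linarith
end
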